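/- Suppose G is cyclic. Let N be a ℤ_p[G]-module and c ∈ N an element such that the ℤ_p[G]-submodule ⟨c⟩ generated by c is free of rank 1 over ℤ_p[G] and the quotient module N/⟨c⟩ is finite. Then ⟨c⟩^χ = ⟨c⟩ ∩ N^χ, and the map N^χ/⟨c⟩^χ → (N/⟨c⟩)^χ induced by the canonical projection N → N/⟨c⟩ is an isomorphism. -/

import Mathlib

/- STATEMENT 8: setup as before, `G` cyclic.  Let `N` be a `ℤ_p[G]`-module and `c ∈ N`
such that the submodule `⟨c⟩` generated by `c` is free of rank 1 over `ℤ_p[G]` (i.e.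
`y ↦ y • c` is injective) and `N/⟨c⟩` is finite.  Then `⟨c⟩^χ = ⟨c⟩ ∩ N^χ`, and the map
`N^χ/⟨c⟩^χ → (N/⟨c⟩)^χ` induced by the projection `N → N/⟨c⟩` is an isomorphism; the
latter is expressed by saying that the image of `N^χ` in `N/⟨c⟩` is exactly `(N/⟨c⟩)^χ`
(surjectivity; injectivity is the first equality, since the kernel of
`N^χ → (N/⟨c⟩)^χ` is `⟨c⟩ ∩ N^χ`). -/

open scoped Classical
noncomputable section

variable (p : ℕ) [Fact p.Prime] (G : Type) [CommGroup G]
  (χ : G →* AlgebraicClosure ℚ_[p])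

/-- `ℤ_p[χ]`, the subring generated over `ℤ_p` by the values of `χ`. -/
def Zchi : Subalgebra ℤ_[p] (AlgebraicClosure ℚ_[p]) := Algebra.adjoin ℤ_[p] (Set.range χ)

/-- `χ` with values in `ℤ_p[χ]`. -/
def chiRes : G →* (Zchi p G χ) where
  toFun g := ⟨χ g, Algebra.subset_adjoin ⟨g, rfl⟩⟩
  map_one' := by ext; simp
  map_mul' a b := by ext; simp

/-- The `ℤ_p`-algebra map `ℤ_p[G] → ℤ_p[χ]` induced by `χ`. -/
def Phi : MonoidAlgebra ℤ_[p] G →ₐ[ℤ_[p]] (Zchi p G χ) :=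
  MonoidAlgebra.lift ℤ_[p] _ G (chiRes p G χ)

/-- The ideal `I_χ`, kernel of `ℤ_p[G] → ℤ_p[χ]`. -/
def Ichi : Ideal (MonoidAlgebra ℤ_[p] G) := RingHom.ker (Phi p G χ)

/-- The χ-part `M^χ` of a `ℤ_p[G]`-module `M`: the submodule annihilated by `I_χ`. -/
def chiPart (M : Type) [AddCommGroup M] [Module (MonoidAlgebra ℤ_[p] G) M] :
    Submodule (MonoidAlgebra ℤ_[p] G) M :=
  Submodule.torsionBySet _ M (Ichi p G χ)



/-! Write `G = ⟨σ⟩`. Since `ℤ_p[G]` is generated by `σ` as a `ℤ_p`-algebra, `I_χ` is principal,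
generated by `g = m(σ)` where `m` is the minimal polynomial of `χ(σ)` over the integrally closed
ring `ℤ_p`. A class `x̄ ∈ (N/⟨c⟩)^χ` is killed by some `p^k` because `N/⟨c⟩` is finite, so both
`g x` and `p^k x` lie in `⟨c⟩`. As `⟨c⟩` is free and `p` is a nonzerodivisor on
`ℤ_p[G]/(g) ≅ ℤ_p[χ]`, correcting `x` by a multiple of `c` yields a lift of `x̄` killed by `g`, that
is, lying in `N^χ`. -/

open Polynomial

namespace Submodule

variable {R M M' : Type*} [CommSemiring R] [AddCommMonoid M] [Module R M]
  [AddCommMonoid M'] [Module R M'] (s : Set R)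

theorem map_subtype_torsionBySet (C : Submodule R M) :
    (torsionBySet R C s).map C.subtype = C ⊓ torsionBySet R M s := by
  ext x
  simp only [mem_map, mem_inf, mem_torsionBySet_iff, subtype_apply]
  constructor
  · rintro ⟨y, hy, rfl⟩
    exact ⟨y.2, fun a => by simpa using congrArg Subtype.val (hy a)⟩
  · rintro ⟨hxC, hx⟩
    exact ⟨⟨x, hxC⟩, fun a => Subtype.ext (hx a), rfl⟩

theorem map_torsionBySet_le (f : M →ₗ[R] M') :
    (torsionBySet R M s).map f ≤ torsionBySet R M' s := by
  rintro _ ⟨x, hx, rfl⟩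
  rw [SetLike.mem_coe, mem_torsionBySet_iff] at hx
  rw [mem_torsionBySet_iff]
  exact fun a => by rw [← map_smul, hx a, map_zero]

end Submodule

theorem exists_sub_smul_mem_torsionBy {R N : Type*} [CommRing R] [AddCommGroup N] [Module R N]
    {c : N} (hc : Function.Injective fun y : R => y • c) {g s : R}
    (hs : ∀ f, s * f ∈ Ideal.span {g} → f ∈ Ideal.span {g}) {x : N}
    (hgx : g • x ∈ R ∙ c) (hsx : s • x ∈ R ∙ c) :
    ∃ v : R, x - v • c ∈ Submodule.torsionBy R N g := by
  obtain ⟨f, hf⟩ := Submodule.mem_span_singleton.mp hgx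
  obtain ⟨z, hz⟩ := Submodule.mem_span_singleton.mp hsx
  have hgz : g * z = s * f := hc <| by
    simp only [mul_smul, hz, hf, smul_comm g s x]
  obtain ⟨v, hv⟩ := Ideal.mem_span_singleton'.mp (hs f (hgz ▸ Ideal.mul_mem_right z _
    (Ideal.mem_span_singleton_self g)))
  refine ⟨v, ?_⟩
  rw [Submodule.mem_torsionBy_iff, smul_sub, ← hf, smul_smul, mul_comm, hv, sub_self]

theorem MonoidAlgebra.aeval_of_surjective {R M : Type*} [CommSemiring R] [Monoid M] {σ : M}
    (hσ : ∀ g : M, g ∈ Submonoid.powers σ) :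
    Function.Surjective (aeval (MonoidAlgebra.of R M σ) : R[X] →ₐ[R] MonoidAlgebra R M) := by
  intro a
  induction a using MonoidAlgebra.induction_on with
  | of g =>
    obtain ⟨i, rfl⟩ := hσ g
    exact ⟨X ^ i, by simp⟩
  | add f g hf hg =>
    obtain ⟨P, rfl⟩ := hf
    obtain ⟨Q, rfl⟩ := hg
    exact ⟨P + Q, map_add _ _ _⟩
  | smul r f hf =>
    obtain ⟨P, rfl⟩ := hf
    exact ⟨r • P, map_smul _ _ _⟩

theorem AlgHom.ker_eq_span_aeval_minpoly {A R S : Type*} [CommRing A] [IsDomain A]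
    [IsIntegrallyClosed A] [CommRing R] [Algebra A R] [CommRing S] [IsDomain S] [Algebra A S]
    [Module.IsTorsionFree A S] (φ : R →ₐ[A] S) {r : R}
    (hr : Function.Surjective (aeval r : A[X] →ₐ[A] R)) (hφr : IsIntegral A (φ r)) :
    RingHom.ker φ = Ideal.span {aeval r (minpoly A (φ r))} := by
  rw [← Ideal.map_comap_of_surjective _ hr (RingHom.ker φ), AlgHom.comap_ker, ← aeval_algHom,
    show RingHom.ker (aeval (φ r)) = _ from minpoly.ker_eval hφr, Ideal.map_span,
    Set.image_singleton]

theorem PadicInt.exists_pow_smul_eq_zero_of_isOfFinAddOrder {p : ℕ} [Fact p.Prime]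
    {R M : Type*} [Ring R] [Algebra ℤ_[p] R] [AddCommGroup M] [Module R M] {y : M}
    (hy : IsOfFinAddOrder y) :
    ∃ k : ℕ, (p : R) ^ k • y = 0 := by
  obtain ⟨k, m, hpm, ht⟩ := Nat.exists_eq_pow_mul_and_not_dvd hy.addOrderOf_pos.ne' p
    (Fact.out : p.Prime).ne_one
  have hm : IsUnit (m : R) := by
    rw [← map_natCast (algebraMap ℤ_[p] R)]
    refine (PadicInt.isUnit_iff.mpr ?_).map _
    exact le_antisymm (PadicInt.norm_le_one _)
      (not_lt.mp (mt PadicInt.norm_natCast_lt_one_iff.mp hpm))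
  refine ⟨k, (hm.smul_eq_zero).mp ?_⟩
  rw [smul_smul, ← Nat.cast_pow, ← Nat.cast_mul, mul_comm, ← ht, Nat.cast_smul_eq_nsmul,
    addOrderOf_nsmul_eq_zero]

instance : Module.IsTorsionFree ℤ_[p] (AlgebraicClosure ℚ_[p]) := by
  rw [Module.isTorsionFree_iff_algebraMap_injective,
    IsScalarTower.algebraMap_eq ℤ_[p] ℚ_[p] (AlgebraicClosure ℚ_[p])]
  exact (algebraMap ℚ_[p] _).injective.comp (FaithfulSMul.algebraMap_injective _ _)

theorem isIntegral_chiRes [Finite G] (σ : G) : IsIntegral ℤ_[p] (chiRes p G χ σ) := by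
  refine IsIntegral.of_pow (isOfFinOrder_of_finite σ).orderOf_pos ?_
  rw [← map_pow, pow_orderOf_eq_one, map_one]
  exact isIntegral_one

theorem Ichi_eq_span_aeval_minpoly [Finite G] {σ : G} (hσ : ∀ g : G, g ∈ Subgroup.zpowers σ) :
    Ichi p G χ = Ideal.span
      {aeval (MonoidAlgebra.of ℤ_[p] G σ) (minpoly ℤ_[p] (chiRes p G χ σ))} := by
  have hgen : ∀ g : G, g ∈ Submonoid.powers σ := fun g => mem_powers_iff_mem_zpowers.mpr (hσ g)
  have hPhi : Phi p G χ (MonoidAlgebra.of ℤ_[p] G σ) = chiRes p G χ σ := MonoidAlgebra.lift_of _ _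
  simpa only [Ichi, hPhi] using AlgHom.ker_eq_span_aeval_minpoly (Phi p G χ)
    (MonoidAlgebra.aeval_of_surjective hgen) (hPhi ▸ isIntegral_chiRes p G χ σ)

-- `ℤ_p[G]/I_χ ≅ ℤ_p[χ]` has no `p`-torsion.
theorem mem_Ichi_of_pow_mul_mem {k : ℕ} {f : MonoidAlgebra ℤ_[p] G}
    (hf : (p : MonoidAlgebra ℤ_[p] G) ^ k * f ∈ Ichi p G χ) : f ∈ Ichi p G χ := by
  rw [Ichi, RingHom.mem_ker, map_mul, map_pow, map_natCast] at hf
  rw [Ichi, RingHom.mem_ker]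
  exact (mul_eq_zero.mp hf).resolve_left
    (pow_ne_zero _ (Nat.cast_ne_zero.mpr (Fact.out : p.Prime).ne_zero))

theorem statement8 [Fintype G] [IsCyclic G]
    (N : Type) [AddCommGroup N] [Module (MonoidAlgebra ℤ_[p] G) N] (c : N)
    (hfree : Function.Injective fun y : MonoidAlgebra ℤ_[p] G => y • c)
    (hfin : Finite (N ⧸ Submodule.span (MonoidAlgebra ℤ_[p] G) {c})) :
    (Submodule.map (Submodule.span (MonoidAlgebra ℤ_[p] G) {c}).subtype
        (chiPart p G χ (Submodule.span (MonoidAlgebra ℤ_[p] G) {c}))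
      = Submodule.span (MonoidAlgebra ℤ_[p] G) {c} ⊓ chiPart p G χ N) ∧
    Submodule.map (Submodule.span (MonoidAlgebra ℤ_[p] G) {c}).mkQ (chiPart p G χ N)
      = chiPart p G χ (N ⧸ Submodule.span (MonoidAlgebra ℤ_[p] G) {c}) := by
  refine ⟨Submodule.map_subtype_torsionBySet _ _,
    le_antisymm (Submodule.map_torsionBySet_le _ _) ?_⟩
  obtain ⟨σ, hσ⟩ := IsCyclic.exists_generator (α := G)
  obtain ⟨g, hI⟩ : ∃ g, Ichi p G χ = Ideal.span {g} := ⟨_, Ichi_eq_span_aeval_minpoly p G χ hσ⟩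
  intro xbar hxbar
  obtain ⟨k, hk⟩ := PadicInt.exists_pow_smul_eq_zero_of_isOfFinAddOrder (p := p)
    (R := MonoidAlgebra ℤ_[p] G) (isOfFinAddOrder_of_finite xbar)
  obtain ⟨x, rfl⟩ := Submodule.Quotient.mk_surjective _ xbar
  simp only [chiPart, hI, Submodule.torsionBySet_ideal_span_singleton_eq] at hxbar ⊢
  rw [Submodule.mem_torsionBy_iff, ← Submodule.Quotient.mk_smul, Submodule.Quotient.mk_eq_zero]
    at hxbar
  rw [← Submodule.Quotient.mk_smul, Submodule.Quotient.mk_eq_zero] at hk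
  obtain ⟨v, hv⟩ := exists_sub_smul_mem_torsionBy hfree
    (fun f hf => hI ▸ mem_Ichi_of_pow_mul_mem p G χ (hI ▸ hf)) hxbar hk
  refine ⟨x - v • c, hv, ?_⟩
  simp [(Submodule.Quotient.mk_eq_zero _).mpr (Submodule.mem_span_singleton_self c)]

end
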